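/- arXiv:1705.08766 — 2 statements merged into one kernel-verified Lean document; each statement's English description precedes it below -/
import Mathlib

section
/- Let τ > 1, q ≥ 4, c₂ ≥ 1, and set s_ν = 2^{q+ν}+1, σ_ν = 2^{-(ν+4)}, δ_ν = 4(τ+3)(ν+q)ln 2/s_ν, and ε_ν = c₂ σ_ν^{-τ-3} e^{-s_ν δ_ν} δ_ν^{-3}. Then ε_ν ≤ c₂ (4(τ+3)ln 2)^{-3} (q+ν)^{-3}, and consequently Σ_{ν=0}^∞ ε_ν → 0 as q → ∞. -/
open Real Filter Topology

/-!
Since `s_ν δ_ν = 4(τ+3)(q+ν) ln 2`, the factor `e^{-s_ν δ_ν} = 2^{-4(τ+3)(q+ν)}` absorbs both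
`σ_ν^{-τ-3} = 2^{(ν+4)(τ+3)}` and `s_ν^3 ≤ 2^{3(q+ν+1)}` once `q ≥ 4`, which leaves
`ε_ν ≤ c₂ (4(τ+3) ln 2)^{-3} (q+ν)^{-3}`. Summed over `ν`, this is a tail of the convergent series
`∑ n^{-3}`, hence tends to `0` as `q → ∞`.
-/

theorem tendsto_tsum_of_le_shift {f : ℕ → ℕ → ℝ} {g : ℕ → ℝ} (hg : Summable g)
    (hf : ∀ q ν, 0 ≤ f q ν) (hle : ∀ᶠ q in atTop, ∀ ν, f q ν ≤ g (q + ν)) :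
    Tendsto (fun q => ∑' ν, f q ν) atTop (𝓝 0) := by
  have htail : ∀ q, Summable fun ν => g (q + ν) := fun q => by
    simpa only [add_comm q] using (summable_nat_add_iff q).2 hg
  refine squeeze_zero' (g := fun q => ∑' ν, g (q + ν))
    (.of_forall fun q => tsum_nonneg (hf q)) ?_ ?_
  · filter_upwards [hle] with q hq
    exact (htail q |>.of_nonneg_of_le (hf q) hq).tsum_le_tsum hq (htail q)
  · simpa only [add_comm] using tendsto_sum_nat_add g

theorem two_pow_add_one_le_two_pow_succ (n : ℕ) : (2:ℝ) ^ n + 1 ≤ 2 ^ (n + 1) := by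
  rw [pow_succ]; linarith [one_le_pow₀ (M₀ := ℝ) one_le_two (n := n)]

noncomputable def kamError (τ c₂ : ℝ) (q ν : ℕ) : ℝ :=
  let s : ℝ := 2 ^ (q + ν) + 1
  let δ : ℝ := 4 * (τ + 3) * ((ν : ℝ) + q) * log 2 / s
  c₂ * ((2:ℝ) ^ (-((ν : ℝ) + 4))) ^ (-τ - 3) * exp (-s * δ) * δ ^ (-3 : ℤ)

theorem kamError_eq (τ c₂ : ℝ) (q ν : ℕ) :
    kamError τ c₂ q ν = c₂ * ((2:ℝ) ^ ((ν + 4) * (τ + 3) - 4 * (τ + 3) * (q + ν)) *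
      ((2:ℝ) ^ (q + ν) + 1) ^ 3) * ((4 * (τ + 3) * log 2) ^ (-3 : ℤ) * ((q : ℝ) + ν) ^ (-3 : ℤ)) := by
  have hs : (2:ℝ) ^ (q + ν) + 1 ≠ 0 := by positivity
  have hσ : ((2:ℝ) ^ (-((ν : ℝ) + 4))) ^ (-τ - 3) = 2 ^ ((ν + 4) * (τ + 3)) := by
    rw [← rpow_mul zero_le_two]; ring_nf
  have hexp : exp (-(4 * (τ + 3) * ((ν : ℝ) + q) * log 2)) =
      2 ^ (-(4 * (τ + 3) * ((q : ℝ) + ν))) := by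
    rw [rpow_def_of_pos two_pos]; ring_nf
  simp only [kamError, neg_mul, mul_div_cancel₀ _ hs, hσ, hexp, div_zpow, ← mul_zpow]
  rw [sub_eq_add_neg, rpow_add two_pos, zpow_neg (_ + 1), div_inv_eq_mul, zpow_ofNat]
  ring_nf

theorem kamError_factor_le_one {τ : ℝ} (hτ : 1 < τ) {q : ℕ} (hq : 4 ≤ q) (ν : ℕ) :
    (2:ℝ) ^ ((ν + 4) * (τ + 3) - 4 * (τ + 3) * (q + ν)) * ((2:ℝ) ^ (q + ν) + 1) ^ 3 ≤ 1 := by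
  have hq' : (4:ℝ) ≤ q := by exact_mod_cast hq
  have hs : ((2:ℝ) ^ (q + ν) + 1) ^ 3 ≤ 2 ^ ((3 * (q + ν + 1) : ℕ) : ℝ) := by
    rw [rpow_natCast, pow_mul']
    gcongr
    exact two_pow_add_one_le_two_pow_succ _
  calc (2:ℝ) ^ ((ν + 4) * (τ + 3) - 4 * (τ + 3) * (q + ν)) * ((2:ℝ) ^ (q + ν) + 1) ^ 3
      ≤ 2 ^ ((ν + 4) * (τ + 3) - 4 * (τ + 3) * (q + ν)) * 2 ^ ((3 * (q + ν + 1) : ℕ) : ℝ) := by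
        gcongr
    _ = 2 ^ ((ν + 4) * (τ + 3) - 4 * (τ + 3) * (q + ν) + 3 * (q + ν + 1)) := by
        rw [← rpow_add two_pos]; push_cast; ring_nf
    _ ≤ 1 := rpow_le_one_of_one_le_of_nonpos one_le_two (by nlinarith)

theorem kamError_nonneg {τ c₂ : ℝ} (hτ : -3 ≤ τ) (hc₂ : 0 ≤ c₂) (q ν : ℕ) :
    0 ≤ kamError τ c₂ q ν := by
  have : 0 ≤ 4 * (τ + 3) * log 2 := mul_nonneg (by linarith) (log_pos one_lt_two).le
  rw [kamError_eq]
  positivity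

theorem kamError_le {τ c₂ : ℝ} (hτ : 1 < τ) (hc₂ : 0 ≤ c₂) {q : ℕ} (hq : 4 ≤ q) (ν : ℕ) :
    kamError τ c₂ q ν ≤ c₂ * (4 * (τ + 3) * log 2) ^ (-3 : ℤ) * ((q : ℝ) + ν) ^ (-3 : ℤ) := by
  have : 0 ≤ 4 * (τ + 3) * log 2 := mul_nonneg (by linarith) (log_pos one_lt_two).le
  rw [kamError_eq, mul_assoc c₂ (_ ^ (-3 : ℤ))]
  calc _ ≤ c₂ * 1 * ((4 * (τ + 3) * log 2) ^ (-3 : ℤ) * ((q : ℝ) + ν) ^ (-3 : ℤ)) := by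
        gcongr
        exact kamError_factor_le_one hτ hq ν
    _ = _ := by rw [mul_one]

theorem kam_epsilon_estimate (τ c₂ : ℝ) (hτ : 1 < τ) (hc₂ : 1 ≤ c₂) :
    let s : ℕ → ℕ → ℝ := fun q ν => 2 ^ (q + ν) + 1
    let σ : ℕ → ℝ := fun ν => 2 ^ (-((ν : ℝ) + 4))
    let δ : ℕ → ℕ → ℝ := fun q ν => 4 * (τ + 3) * ((ν : ℝ) + (q : ℝ)) * Real.log 2 / s q ν
    let ε : ℕ → ℕ → ℝ := fun q ν =>
      c₂ * σ ν ^ (-τ - 3) * Real.exp (-(s q ν) * δ q ν) * (δ q ν) ^ (-3 : ℤ)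
    (∀ q : ℕ, 4 ≤ q → ∀ ν : ℕ,
        ε q ν ≤ c₂ * (4 * (τ + 3) * Real.log 2) ^ (-3 : ℤ) * (((q : ℝ) + (ν : ℝ)) ^ (-3 : ℤ))) ∧
      Tendsto (fun q : ℕ => ∑' ν : ℕ, ε q ν) atTop (𝓝 0) := by
  intro s σ δ ε
  have hc₂₀ : 0 ≤ c₂ := by linarith
  have hbound : ∀ q, 4 ≤ q → ∀ ν, ε q ν ≤ c₂ * (4 * (τ + 3) * log 2) ^ (-3 : ℤ) *
      ((q : ℝ) + ν) ^ (-3 : ℤ) := fun q hq ν => kamError_le hτ hc₂₀ hq ν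
  have hsummable : Summable fun n : ℕ => (n : ℝ) ^ (-3 : ℤ) := by
    simpa only [zpow_neg, zpow_ofNat] using Real.summable_nat_pow_inv.2 (by norm_num : 1 < 3)
  refine ⟨hbound, tendsto_tsum_of_le_shift
    (hsummable.mul_left (c₂ * (4 * (τ + 3) * log 2) ^ (-3 : ℤ)))
    (fun q ν => kamError_nonneg (by linarith) hc₂₀ q ν) ?_⟩
  filter_upwards [eventually_ge_atTop 4] with q hq ν
  simpa only [Nat.cast_add] using hbound q hq ν
end

section
/- Let α > 0, τ > 1, ω a Diophantine number with |kω - l| ≥ α/|k|^τ for all k ≠ 0, l ∈ ℤ, and let P_k be a continuous 2π-periodic function with |P_k(t)| ≤ A e^{-|k|γ} for all t, where k ≠ 0. Then the 2π-periodic solution F_k of F_k' = ikω F_k + P_k given by F_k(t) = e^{ikωt}(∫₀ᵗ P_k e^{-ikωs} ds + (1 - e^{2πikω})^{-1} ∫_{-2π}^0 P_k e^{-ikωs} ds) satisfies |F_k(t)| ≤ (2 + π/2) A e^{-|k|γ} |k|^τ / α for all t ∈ [0, 2π]. -/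
open Real Complex intervalIntegral Set

/-! With `ν = kω` and `f s = P s e^{-iνs}`, periodicity of `P` gives `f (s - 2π) = q f s` for
`q = e^{2πiν}`, so the second integral equals `q ∫_0^{2π} f`. Since `(1 - q)⁻¹ q = (1 - q)⁻¹ - 1`,
the solution is both `∫_0^t f + (1 - q)⁻¹ ∫_{-2π}^0 f` and `-∫_t^{2π} f + (1 - q)⁻¹ ∫_0^{2π} f`;
using the shorter of `[0, t]` and `[t, 2π]` bounds the first term by `π M`. The small divisor obeys
`|1 - q| = 2 |sin πν| ≥ 4 dist(ν, ℤ) ≥ 4α / |k|^τ` by Jordan's inequality, and `π ≤ 2 |k|^τ / α` since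
`α / |k|^τ ≤ dist(ν, ℤ) ≤ 1 / 2`. -/

theorem two_mul_abs_sub_round_le_abs_sin_pi_mul (x : ℝ) :
    2 * |x - round x| ≤ |Real.sin (π * x)| := by
  have hr : |π * (x - round x)| ≤ π / 2 := by
    rw [abs_mul, abs_of_pos pi_pos]
    nlinarith [abs_sub_round x, pi_pos]
  calc 2 * |x - round x| = 2 / π * |π * (x - round x)| := by
        rw [abs_mul, abs_of_pos pi_pos]; field_simp
    _ ≤ |Real.sin (π * (x - round x))| := mul_abs_le_abs_sin hr
    _ = |Real.sin (π * x)| := by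
        rw [mul_sub, mul_comm π (round x : ℝ), sin_sub_int_mul_pi, abs_mul, abs_neg_one_zpow,
          one_mul]

theorem four_mul_abs_sub_round_le_norm_one_sub_exp (x : ℝ) :
    4 * |x - round x| ≤ ‖1 - cexp ((x * (2 * π) : ℝ) * I)‖ := by
  rw [mul_comm _ I, norm_sub_rev, norm_exp_I_mul_ofReal_sub_one, Real.norm_eq_abs, abs_mul,
    abs_two, show x * (2 * π) / 2 = π * x by ring]
  linarith [two_mul_abs_sub_round_le_abs_sin_pi_mul x]

section

variable {E : Type*} [NormedAddCommGroup E] [NormedSpace ℂ E] {f : ℝ → E} {q : ℂ} {T : ℝ}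

theorem integral_neg_period_eq_smul (hf : ∀ s, f (s - T) = q • f s) :
    ∫ s in -T..0, f s = q • ∫ s in 0..T, f s := by
  calc ∫ s in -T..0, f s = ∫ s in 0..T, f (s - T) := by rw [integral_comp_sub_right]; simp
    _ = q • ∫ s in 0..T, f s := by simp only [hf, intervalIntegral.integral_smul]

theorem norm_integral_add_inv_one_sub_smul_integral_le {M t : ℝ} (hf : Continuous f)
    (hM : ∀ s, ‖f s‖ ≤ M) (hshift : ∀ s, f (s - T) = q • f s) (hq : q ≠ 1) (ht : t ∈ Icc 0 T) :
    ‖(∫ s in 0..t, f s) + (1 - q)⁻¹ • ∫ s in -T..0, f s‖ ≤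
      M * (T / 2) + ‖(1 - q)⁻¹‖ * (M * T) := by
  obtain ⟨ht0, htT⟩ := ht
  have hint : ∀ a b, a ≤ b → ‖∫ s in a..b, f s‖ ≤ M * (b - a) := fun a b hab => by
    simpa [abs_of_nonneg (sub_nonneg.2 hab)] using
      norm_integral_le_of_norm_le_const (a := a) (b := b) fun s _ => hM s
  have hM0 : 0 ≤ M := (norm_nonneg _).trans (hM 0)
  have hsmul : ∀ a b, a ≤ b → b - a = T → ‖(1 - q)⁻¹ • ∫ s in a..b, f s‖ ≤ ‖(1 - q)⁻¹‖ * (M * T) :=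
    fun a b hab hlen => by
      rw [norm_smul, ← hlen]
      gcongr
      exact hint a b hab
  rcases le_total t (T / 2) with hle | hge
  · calc _ ≤ ‖∫ s in 0..t, f s‖ + ‖(1 - q)⁻¹ • ∫ s in -T..0, f s‖ := norm_add_le _ _
      _ ≤ M * (T / 2) + ‖(1 - q)⁻¹‖ * (M * T) := by
        gcongr
        · exact (hint 0 t ht0).trans (by nlinarith)
        · exact hsmul _ _ (by linarith) (by ring)
  · have hscalar : (1 - q)⁻¹ * q = (1 - q)⁻¹ - 1 := by
      field_simp [sub_ne_zero.2 hq.symm]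
      ring
    have hsplit := integral_add_adjacent_intervals (μ := MeasureTheory.volume)
      (hf.intervalIntegrable 0 t) (hf.intervalIntegrable t T)
    rw [integral_neg_period_eq_smul hshift, smul_smul, hscalar, sub_smul, one_smul]
    calc _ = ‖-(∫ s in t..T, f s) + (1 - q)⁻¹ • ∫ s in 0..T, f s‖ := by
          rw [← hsplit]; congr 1; abel
      _ ≤ ‖∫ s in t..T, f s‖ + ‖(1 - q)⁻¹ • ∫ s in 0..T, f s‖ := by
          simpa only [norm_neg] using norm_add_le (-∫ s in t..T, f s) _
      _ ≤ M * (T / 2) + ‖(1 - q)⁻¹‖ * (M * T) := by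
        gcongr
        · exact (hint t T htT).trans (by nlinarith)
        · exact hsmul _ _ (ht0.trans htT) (by ring)

end

theorem norm_exp_mul_periodic_solution_le {P : ℝ → ℂ} {ν T M t : ℝ} (hP : Continuous P)
    (hper : ∀ s, P (s + T) = P s) (hM : ∀ s, ‖P s‖ ≤ M) (hq : cexp ((ν * T : ℝ) * I) ≠ 1)
    (ht : t ∈ Icc 0 T) :
    ‖cexp ((ν * t : ℝ) * I) * ((∫ s in 0..t, P s * cexp (-((ν * s : ℝ) * I))) +
        (1 - cexp ((ν * T : ℝ) * I))⁻¹ * ∫ s in -T..0, P s * cexp (-((ν * s : ℝ) * I)))‖ ≤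
      M * (T / 2) + ‖(1 - cexp ((ν * T : ℝ) * I))⁻¹‖ * (M * T) := by
  rw [norm_mul, norm_exp_ofReal_mul_I, one_mul]
  refine norm_integral_add_inv_one_sub_smul_integral_le (by fun_prop) (fun s => ?_) (fun s => ?_)
    hq ht
  · simpa [norm_exp] using hM s
  · rw [smul_eq_mul, mul_left_comm, ← Complex.exp_add, ← hper (s - T), sub_add_cancel]
    push_cast
    ring_nf

theorem small_divisor_solution_bound_general (ω α τ A γ : ℝ) (hα : 0 < α)
    (hdioph : ∀ k l : ℤ, k ≠ 0 → α / |(k : ℝ)| ^ τ ≤ |(k : ℝ) * ω - (l : ℝ)|)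
    (k : ℤ) (hk : k ≠ 0)
    (P : ℝ → ℂ) (hP : Continuous P) (hper : ∀ t : ℝ, P (t + 2 * Real.pi) = P t)
    (hbound : ∀ t : ℝ, ‖P t‖ ≤ A * Real.exp (-|(k : ℝ)| * γ)) :
    let F : ℝ → ℂ := fun t =>
      Complex.exp (Complex.I * (k : ℂ) * (ω : ℂ) * (t : ℂ)) *
        ((∫ s in (0 : ℝ)..t, P s * Complex.exp (-(Complex.I * (k : ℂ) * (ω : ℂ) * (s : ℂ)))) +
          (1 - Complex.exp (2 * Real.pi * Complex.I * (k : ℂ) * (ω : ℂ)))⁻¹ *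
            ∫ s in (-(2 * Real.pi) : ℝ)..(0 : ℝ),
              P s * Complex.exp (-(Complex.I * (k : ℂ) * (ω : ℂ) * (s : ℂ))))
    ∀ t ∈ Set.Icc (0 : ℝ) (2 * Real.pi),
      ‖F t‖ ≤
        (2 + Real.pi / 2) * A * Real.exp (-|(k : ℝ)| * γ) * |(k : ℝ)| ^ τ / α := by
  intro F t ht
  set ν : ℝ := k * ω
  set M := A * Real.exp (-|(k : ℝ)| * γ)
  set β := α / |(k : ℝ)| ^ τ
  have hM : 0 ≤ M := (norm_nonneg _).trans (hbound 0)
  have hβ : 0 < β := div_pos hα (rpow_pos_of_pos (abs_pos.2 (Int.cast_ne_zero.2 hk)) τ)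
  have hβν : β ≤ |ν - round ν| := hdioph k (round ν) hk
  have hdivisor : 4 * β ≤ ‖1 - cexp ((ν * (2 * π) : ℝ) * I)‖ := by
    linarith [four_mul_abs_sub_round_le_norm_one_sub_exp ν]
  have hq : cexp ((ν * (2 * π) : ℝ) * I) ≠ 1 := fun h => by
    rw [h, sub_self, norm_zero] at hdivisor; linarith
  have hinv : ‖(1 - cexp ((ν * (2 * π) : ℝ) * I))⁻¹‖ ≤ 1 / (4 * β) := by
    rw [norm_inv, one_div]
    exact inv_anti₀ (by positivity) hdivisor
  have hphase : ∀ x : ℝ, I * k * ω * x = ((ν * x : ℝ) : ℂ) * I := fun x => by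
    push_cast [ν]; ring
  have hmult : 2 * π * I * k * ω = ((ν * (2 * π) : ℝ) : ℂ) * I := by
    push_cast [ν]; ring
  calc ‖F t‖ ≤ M * (2 * π / 2) + ‖(1 - cexp ((ν * (2 * π) : ℝ) * I))⁻¹‖ * (M * (2 * π)) := by
        simp only [F, hphase, hmult]
        exact norm_exp_mul_periodic_solution_le hP hper hbound hq ht
    _ ≤ M * π + 1 / (4 * β) * (M * (2 * π)) := by
        gcongr
        linarith
    _ ≤ (2 + π / 2) * M / β := by
        have hβ_le : β ≤ 1 / 2 := hβν.trans (abs_sub_round ν)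
        rw [le_div_iff₀ hβ]
        field_simp
        nlinarith [pi_le_four, mul_nonneg hM hβ.le, mul_nonneg hM pi_pos.le]
    _ = (2 + π / 2) * A * Real.exp (-|(k : ℝ)| * γ) * |(k : ℝ)| ^ τ / α := by
        simp only [M, β]
        field_simp

theorem small_divisor_solution_bound (ω α τ A γ : ℝ) (hα : 0 < α) (hτ : 1 < τ)
    (hA : 0 < A) (hγ : 0 < γ)
    (hdioph : ∀ k l : ℤ, k ≠ 0 → α / |(k : ℝ)| ^ τ ≤ |(k : ℝ) * ω - (l : ℝ)|)
    (k : ℤ) (hk : k ≠ 0)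
    (P : ℝ → ℂ) (hP : Continuous P) (hper : ∀ t : ℝ, P (t + 2 * Real.pi) = P t)
    (hbound : ∀ t : ℝ, ‖P t‖ ≤ A * Real.exp (-|(k : ℝ)| * γ)) :
    let F : ℝ → ℂ := fun t =>
      Complex.exp (Complex.I * (k : ℂ) * (ω : ℂ) * (t : ℂ)) *
        ((∫ s in (0 : ℝ)..t, P s * Complex.exp (-(Complex.I * (k : ℂ) * (ω : ℂ) * (s : ℂ)))) +
          (1 - Complex.exp (2 * Real.pi * Complex.I * (k : ℂ) * (ω : ℂ)))⁻¹ *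
            ∫ s in (-(2 * Real.pi) : ℝ)..(0 : ℝ),
              P s * Complex.exp (-(Complex.I * (k : ℂ) * (ω : ℂ) * (s : ℂ))))
    ∀ t ∈ Set.Icc (0 : ℝ) (2 * Real.pi),
      ‖F t‖ ≤
        (2 + Real.pi / 2) * A * Real.exp (-|(k : ℝ)| * γ) * |(k : ℝ)| ^ τ / α :=
  small_divisor_solution_bound_general ω α τ A γ hα hdioph k hk P hP hper hbound
end
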